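/- Let S be a d-symbol, ℓ ≥ 1, and let S_{*ℓ} = s_{dℓ}(s_d^{-1}(S)) be the associated dℓ-symbol. Let δ = (c_0,…,c_{d−1}; m) be a d-hook data tuple and define the dℓ-hook data tuple δ_{*ℓ} = (c'_0,…,c'_{dℓ−1}; mℓ) by c'_{sd+i} = sm + c_i for s ∈ {0,…,ℓ−1} and i ∈ {0,…,d−1}. Then the multisets of generalized hook lengths agree: 𝓗^δ(S) = 𝓗^{δ_{*ℓ}}(S_{*ℓ}). -/

import Mathlib

/-- `X^{+s} = (X + s) ∪ {0,…,s−1}` for a β-set `X`. -/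
def shiftUp (X : Finset ℕ) (s : ℕ) : Finset ℕ :=
  X.image (· + s) ∪ Finset.range s

/-- The `d`-symbol `s_d(X)` associated to a β-set `X`:
`X_i^{(d)} = {k ∈ ℕ : i + k*d ∈ X}`. -/
def sd (d : ℕ) (X : Finset ℕ) : Fin d → Finset ℕ :=
  fun i => (X.filter fun a => a % d = (i : ℕ)).image fun a => a / d

/-- The inverse of `s_d`, recovering the β-set of a `d`-symbol. -/
def sdInv (d : ℕ) (S : Fin d → Finset ℕ) : Finset ℕ :=
  Finset.univ.biUnion fun i => (S i).image fun k => (i : ℕ) + k * d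

/-- Hooks of a β-set `X`: pairs `(a,b)` with `a > b`, `a ∈ X`, `b ∉ X`. -/
def betaHooks (X : Finset ℕ) : Finset (ℕ × ℕ) :=
  (X ×ˢ Finset.range (X.sup id + 1)).filter fun p => p.2 < p.1 ∧ p.2 ∉ X

/-- Hooks of a `d`-symbol `S`: quadruples `(a,b,i,j)` with `a ∈ S i`, `b ∉ S j`,
and either `a > b`, or `a = b` and `i > j`. -/
def symbolHooks {d : ℕ} (S : Fin d → Finset ℕ) : Finset (ℕ × ℕ × Fin d × Fin d) :=
  (Finset.range ((Finset.univ.sup fun i => (S i).sup id) + 1) ×ˢ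
      Finset.range ((Finset.univ.sup fun i => (S i).sup id) + 1) ×ˢ
      (Finset.univ : Finset (Fin d)) ×ˢ (Finset.univ : Finset (Fin d))).filter
    fun z => z.1 ∈ S z.2.2.1 ∧ z.2.1 ∉ S z.2.2.2 ∧
      (z.2.1 < z.1 ∨ (z.1 = z.2.1 ∧ z.2.2.2 < z.2.2.1))

/-- The partition `p(X)` of a β-set `X = {a_1 > … > a_t}`, as the multiset of the
nonzero numbers among `a_i − (t−i)`; the element `a` contributes the part
`a − #{b ∈ X : b < a}`. -/
def partitionOf (X : Finset ℕ) : Multiset ℕ :=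
  Multiset.filter (· ≠ 0) (X.val.map fun a => a - (X.filter (· < a)).card)

/-- `r`, the maximal number of parts among the partitions `p(X_i)` of a `d`-symbol. -/
def quotCard {d : ℕ} (S : Fin d → Finset ℕ) : ℕ :=
  Finset.univ.sup fun i => Multiset.card (partitionOf (S i))

/-- `Y` is the balanced quotient `Q(S)` of `S`: each `Y i` is the (unique) β-set of
cardinality `r` with `p(Y i) = p(S i)`, where `r` is the maximal number of parts
among the `p(S i)`. -/
def IsBalancedQuotient {d : ℕ} (S Y : Fin d → Finset ℕ) : Prop :=
  ∀ i, (Y i).card = quotCard S ∧ partitionOf (Y i) = partitionOf (S i)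

/-- The core `C(S) = ([x_0],…,[x_{d−1}])` of a `d`-symbol, `x_i = |X_i|`. -/
def coreSymbol {d : ℕ} (S : Fin d → Finset ℕ) : Fin d → Finset ℕ :=
  fun i => Finset.range (S i).card

/-- The `δ`-length `k(a−b) + c_i − c_j` of a hook `(a,b,i,j)`, for the
`d`-hook data tuple `δ = (c_0,…,c_{d−1};k)`. -/
noncomputable def hookLen {d : ℕ} (c : Fin d → ℝ) (k : ℝ)
    (z : ℕ × ℕ × Fin d × Fin d) : ℝ :=
  k * ((z.1 - z.2.1 : ℕ) : ℝ) + c z.2.2.1 - c z.2.2.2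

/-- The multiset `𝓗^δ(S)` of `δ`-lengths of all hooks of `S`. -/
noncomputable def hookLens {d : ℕ} (c : Fin d → ℝ) (k : ℝ)
    (S : Fin d → Finset ℕ) : Multiset ℝ :=
  (symbolHooks S).val.map (hookLen c k)

/-- `H_{ij}^ℓ(S)`, the set of hooks `(a,b,i,j)` of `S` with `a − b = ℓ`. -/
def Hij {d : ℕ} (S : Fin d → Finset ℕ) (i j : Fin d) (ℓ : ℕ) :
    Finset (ℕ × ℕ × Fin d × Fin d) :=
  (symbolHooks S).filter fun z => z.2.2.1 = i ∧ z.2.2.2 = j ∧ z.1 - z.2.1 = ℓ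

/-- The sign-modified length `h̄^{δ_S}` (on hooks of the balanced quotient), where
`x` records the cardinalities `x_i = |X_i|` of `S`, and `δ_S = (c_i + x_i k; k)`.
For a hook `z = (a,b,u,v)` with `ℓ = a − b`: relabelling so that `Δ = x_i − x_j ≥ 0`,
the sign is `+` if `z` lies in position `(i,j)`, or in position `(j,i)` with `ℓ > Δ`,
or in position `(j,i)` with `ℓ = Δ` and `i < j`; otherwise the sign is `−`. -/
noncomputable def signedLen {d : ℕ} (x : Fin d → ℕ) (c : Fin d → ℝ) (k : ℝ)
    (z : ℕ × ℕ × Fin d × Fin d) : ℝ :=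
  if x z.2.2.2 ≤ x z.2.2.1 then
    k * ((z.1 - z.2.1 : ℕ) : ℝ) + (c z.2.2.1 + (x z.2.2.1 : ℝ) * k)
      - (c z.2.2.2 + (x z.2.2.2 : ℝ) * k)
  else if x z.2.2.2 - x z.2.2.1 < z.1 - z.2.1 ∨
      (z.1 - z.2.1 = x z.2.2.2 - x z.2.2.1 ∧ (z.2.2.2 : ℕ) < (z.2.2.1 : ℕ)) then
    k * ((z.1 - z.2.1 : ℕ) : ℝ) + (c z.2.2.1 + (x z.2.2.1 : ℝ) * k)
      - (c z.2.2.2 + (x z.2.2.2 : ℝ) * k)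
  else
    -(k * ((z.1 - z.2.1 : ℕ) : ℝ) + (c z.2.2.1 + (x z.2.2.1 : ℝ) * k)
      - (c z.2.2.2 + (x z.2.2.2 : ℝ) * k))

/-- The permutation `σ_{d,ℓ,e}` of `ℕ`:
`σ(r(dℓ) + sd + t) = r(dℓ) + sd + ((t + re) mod d)`. -/
def twistFun (d ℓ e : ℕ) (n : ℕ) : ℕ :=
  d * ℓ * (n / (d * ℓ)) + d * (n % (d * ℓ) / d) + (n % d + n / (d * ℓ) * e) % d

/-!
Writing `S = s_d(X)`, the hooks of `S` are exactly the images of the hooks `(A, B)` of the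
β-set `X` under `n ↦ (n / d, n % d)` (applied to `A` and to `B`), since this map turns the
order of `ℕ` into the lexicographic order used to define symbol hooks. The `δ`-length of
the image of `(A, B)` is `w(A) − w(B)` for the weight `w(n) = m⌊n/d⌋ + c_{n mod d}`, and
`δ_{*ℓ}` is built so that the corresponding weight for `dℓ` and `mℓ` is the same function
of `n`. Hence both multisets are the image of the hooks of `X` under `(A, B) ↦ w(A) − w(B)`.
-/

variable {d : ℕ}

lemma mem_betaHooks {X : Finset ℕ} {p : ℕ × ℕ} :
    p ∈ betaHooks X ↔ p.1 ∈ X ∧ p.2 ∉ X ∧ p.2 < p.1 := by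
  simp only [betaHooks, Finset.mem_filter, Finset.mem_product, Finset.mem_range]
  refine ⟨by tauto, fun ⟨h1, h2, h3⟩ => ⟨⟨h1, ?_⟩, h3, h2⟩⟩
  have : p.1 ≤ X.sup id := Finset.le_sup (f := id) h1
  omega

lemma mem_symbolHooks {S : Fin d → Finset ℕ} {z : ℕ × ℕ × Fin d × Fin d} :
    z ∈ symbolHooks S ↔ z.1 ∈ S z.2.2.1 ∧ z.2.1 ∉ S z.2.2.2 ∧
      (z.2.1 < z.1 ∨ (z.1 = z.2.1 ∧ z.2.2.2 < z.2.2.1)) := by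
  simp only [symbolHooks, Finset.mem_filter, Finset.mem_product, Finset.mem_range,
    Finset.mem_univ, and_true]
  refine ⟨by tauto, fun ⟨h1, h2, h3⟩ => ⟨⟨?_, ?_⟩, h1, h2, h3⟩⟩ <;>
  · have ha : z.1 ≤ (S z.2.2.1).sup id := Finset.le_sup (f := id) h1
    have hb : (S z.2.2.1).sup id ≤ Finset.univ.sup fun i => (S i).sup id :=
      Finset.le_sup (f := fun i => (S i).sup id) (Finset.mem_univ _)
    omega

lemma mul_add_div_mod (hd : 0 < d) (k : ℕ) (i : Fin d) :
    (k * d + i) / d = k ∧ (k * d + i) % d = i :=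
  (Nat.div_mod_unique hd).2 ⟨by ring, i.isLt⟩

lemma mem_sd (hd : 0 < d) {X : Finset ℕ} {i : Fin d} {k : ℕ} :
    k ∈ sd d X i ↔ k * d + i ∈ X := by
  simp only [sd, Finset.mem_image, Finset.mem_filter]
  constructor
  · rintro ⟨A, ⟨hA, hmod⟩, hdiv⟩
    rwa [← hdiv, ← hmod, Nat.div_add_mod']
  · intro h
    obtain ⟨hdiv, hmod⟩ := mul_add_div_mod hd k i
    exact ⟨_, ⟨h, hmod⟩, hdiv⟩

lemma sd_sdInv (hd : 0 < d) (S : Fin d → Finset ℕ) : sd d (sdInv d S) = S := by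
  ext i k
  simp only [mem_sd hd, sdInv, Finset.mem_biUnion, Finset.mem_univ, Finset.mem_image, true_and]
  constructor
  · rintro ⟨i', a, ha, heq⟩
    rw [add_comm] at heq
    obtain ⟨hdiv, hmod⟩ := mul_add_div_mod hd a i'
    rw [heq, (mul_add_div_mod hd k i).1] at hdiv
    rw [heq, (mul_add_div_mod hd k i).2] at hmod
    obtain rfl : i' = i := Fin.ext hmod.symm
    rwa [hdiv]
  · exact fun h => ⟨i, k, h, add_comm _ _⟩

def divModHook (hd : 0 < d) (p : ℕ × ℕ) : ℕ × ℕ × Fin d × Fin d :=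
  (p.1 / d, p.2 / d, ⟨p.1 % d, Nat.mod_lt _ hd⟩, ⟨p.2 % d, Nat.mod_lt _ hd⟩)

lemma divModHook_injective (hd : 0 < d) : Function.Injective (divModHook hd) := by
  rintro ⟨A, B⟩ ⟨A', B'⟩ h
  simp only [divModHook, Prod.mk.injEq, Fin.mk.injEq] at h
  obtain ⟨h1, h2, h3, h4⟩ := h
  rw [Prod.mk.injEq, ← Nat.div_add_mod' A d, ← Nat.div_add_mod' B d, h1, h2, h3, h4,
    Nat.div_add_mod', Nat.div_add_mod']
  exact ⟨rfl, rfl⟩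

lemma divModHook_surjective (hd : 0 < d) : Function.Surjective (divModHook hd) := by
  rintro ⟨a, b, i, j⟩
  obtain ⟨ha, hi⟩ := mul_add_div_mod hd a i
  obtain ⟨hb, hj⟩ := mul_add_div_mod hd b j
  exact ⟨(a * d + i, b * d + j), by simp only [divModHook, ha, hi, hb, hj]⟩

lemma lt_iff_div_lt_or_div_eq_and_mod_lt {A B : ℕ} :
    B < A ↔ B / d < A / d ∨ (A / d = B / d ∧ B % d < A % d) := by
  have hA := Nat.div_add_mod' A d
  have hB := Nat.div_add_mod' B d
  constructor
  · intro h
    rcases lt_trichotomy (B / d) (A / d) with hlt | heq | hgt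
    · exact Or.inl hlt
    · refine Or.inr ⟨heq.symm, ?_⟩
      rw [heq] at hB
      omega
    · exact absurd (Nat.div_le_div_right (c := d) h.le) (not_le.2 hgt)
  · rintro (hlt | ⟨heq, hmod⟩)
    · exact Nat.lt_of_div_lt_div hlt
    · rw [heq] at hA
      omega

lemma divModHook_mem_symbolHooks_sd_iff (hd : 0 < d) {X : Finset ℕ} {p : ℕ × ℕ} :
    divModHook hd p ∈ symbolHooks (sd d X) ↔ p ∈ betaHooks X := by
  simp only [mem_symbolHooks, mem_betaHooks, divModHook, mem_sd hd, Nat.div_add_mod',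
    Fin.mk_lt_mk, ← lt_iff_div_lt_or_div_eq_and_mod_lt]

lemma symbolHooks_sd (hd : 0 < d) (X : Finset ℕ) :
    symbolHooks (sd d X) = (betaHooks X).map ⟨divModHook hd, divModHook_injective hd⟩ := by
  ext z
  obtain ⟨p, rfl⟩ := divModHook_surjective hd z
  rw [divModHook_mem_symbolHooks_sd_iff]
  exact (Finset.mem_map' _).symm

noncomputable def betaWeight (hd : 0 < d) (c : Fin d → ℝ) (k : ℝ) (n : ℕ) : ℝ :=
  k * ((n / d : ℕ) : ℝ) + c ⟨n % d, Nat.mod_lt _ hd⟩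

lemma hookLen_divModHook (hd : 0 < d) (c : Fin d → ℝ) (k : ℝ) {A B : ℕ} (h : B ≤ A) :
    hookLen c k (divModHook hd (A, B)) = betaWeight hd c k A - betaWeight hd c k B := by
  simp only [hookLen, divModHook, betaWeight, Nat.cast_sub (Nat.div_le_div_right h)]
  ring

lemma hookLens_sd (hd : 0 < d) (X : Finset ℕ) (c : Fin d → ℝ) (k : ℝ) :
    hookLens c k (sd d X) =
      (betaHooks X).val.map fun p => betaWeight hd c k p.1 - betaWeight hd c k p.2 := by
  rw [hookLens, symbolHooks_sd hd, Finset.map_val, Multiset.map_map]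
  refine Multiset.map_congr rfl fun p hp => ?_
  exact hookLen_divModHook hd c k (mem_betaHooks.1 hp).2.2.le

lemma betaWeight_mul (hd : 0 < d) {ℓ : ℕ} (hdℓ : 0 < d * ℓ) (c : Fin d → ℝ) (k : ℝ) (n : ℕ) :
    betaWeight hdℓ
        (fun i' : Fin (d * ℓ) => (((i' : ℕ) / d : ℕ) : ℝ) * k + c ⟨(i' : ℕ) % d, Nat.mod_lt _ hd⟩)
        (k * ℓ) n =
      betaWeight hd c k n := by
  have hsplit : ((n / d : ℕ) : ℝ) = ((n / d % ℓ : ℕ) : ℝ) + ℓ * ((n / d / ℓ : ℕ) : ℝ) := by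
    exact_mod_cast (Nat.mod_add_div (n / d) ℓ).symm
  simp only [betaWeight, Nat.mod_mul_right_div_self, Nat.mod_mul_right_mod,
    ← Nat.div_div_eq_div_mul, hsplit]
  ring

theorem hookLens_star_eq_general (d : ℕ) (hd : 0 < d) (ℓ : ℕ) (hℓ : 0 < ℓ)
    (S : Fin d → Finset ℕ) (c : Fin d → ℝ) (m : ℝ) :
    hookLens c m S =
      hookLens
        (fun i' : Fin (d * ℓ) =>
          (((i' : ℕ) / d : ℕ) : ℝ) * m + c ⟨(i' : ℕ) % d, Nat.mod_lt _ hd⟩)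
        (m * (ℓ : ℝ)) (sd (d * ℓ) (sdInv d S)) := by
  have hdℓ : 0 < d * ℓ := Nat.mul_pos hd hℓ
  conv_lhs => rw [← sd_sdInv hd S]
  simp only [hookLens_sd hd, hookLens_sd hdℓ, betaWeight_mul hd hdℓ]

/-- `𝓗^δ(S) = 𝓗^{δ_{*ℓ}}(S_{*ℓ})`: the multisets of generalized hook lengths of a
`d`-symbol `S` (w.r.t. `δ = (c_0,…,c_{d−1}; m)`) and of the associated `dℓ`-symbol
`S_{*ℓ} = s_{dℓ}(s_d⁻¹(S))` (w.r.t. `δ_{*ℓ}`, with entry `sm + c_i` in position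
`sd + i` and multiplier `mℓ`) agree. -/
theorem hookLens_star_eq (d : ℕ) (hd : 0 < d) (ℓ : ℕ) (hℓ : 0 < ℓ)
    (S : Fin d → Finset ℕ) (c : Fin d → ℝ) (m : ℝ) (hm : 0 ≤ m) :
    hookLens c m S =
      hookLens
        (fun i' : Fin (d * ℓ) =>
          (((i' : ℕ) / d : ℕ) : ℝ) * m + c ⟨(i' : ℕ) % d, Nat.mod_lt _ hd⟩)
        (m * (ℓ : ℝ)) (sd (d * ℓ) (sdInv d S)) :=
  hookLens_star_eq_general d hd ℓ hℓ S c m
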